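/- arXiv:2304.00103 — 3 statements merged into one kernel-verified Lean document; each statement's English description precedes it below -/
import Mathlib

section
/- Let V and Q be real Hilbert spaces, B : V → Q a bounded linear operator, W = ker B, and P : V → V the orthogonal projection onto W. Assume there is β > 0 such that β‖v‖ ≤ ‖Bv‖ for every v ∈ W^⊥. Then for every λ ≥ 0 and every v ∈ V, min(1, β²)·(‖v‖² + λ‖v − Pv‖²) ≤ ‖v‖² + λ‖Bv‖² ≤ max(1, ‖B‖²)·(‖v‖² + λ‖v − Pv‖²). In particular the constants are independent of λ. -/
open scoped RealInnerProductSpace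

/-!
On `(ker B)ᗮ` the inf-sup condition and the operator norm give `β ‖w‖ ≤ ‖B w‖ ≤ ‖B‖ ‖w‖`.
Since `B v = B (v - P v)` with `v - P v ∈ (ker B)ᗮ`, the terms `‖B v‖²` and `‖v - P v‖²`
are comparable with constants `β²` and `‖B‖²`, and adding `‖v‖²` to both sides costs
only a `min` or `max` with `1`, whatever the weight `λ ≥ 0`.
-/

lemma min_one_mul_add_mul_le {x y z c lam : ℝ} (hx : 0 ≤ x) (hy : 0 ≤ y) (hlam : 0 ≤ lam)
    (h : c * y ≤ z) : min 1 c * (x + lam * y) ≤ x + lam * z := by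
  have hxm : min 1 c * x ≤ x := mul_le_of_le_one_left hx (min_le_left _ _)
  have hym : min 1 c * y ≤ z := (mul_le_mul_of_nonneg_right (min_le_right _ _) hy).trans h
  nlinarith [mul_le_mul_of_nonneg_left hym hlam]

lemma add_mul_le_max_one_mul_add_mul {x y z C lam : ℝ} (hx : 0 ≤ x) (hy : 0 ≤ y)
    (hlam : 0 ≤ lam) (h : z ≤ C * y) : x + lam * z ≤ max 1 C * (x + lam * y) := by
  have hxm : x ≤ max 1 C * x := le_mul_of_one_le_left hx (le_max_left _ _)
  have hym : z ≤ max 1 C * y := h.trans (mul_le_mul_of_nonneg_right (le_max_right _ _) hy)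
  nlinarith [mul_le_mul_of_nonneg_left hym hlam]

theorem infsup_uniform_form_equivalence_general {V Q : Type*}
    [NormedAddCommGroup V] [InnerProductSpace ℝ V]
    [NormedAddCommGroup Q] [InnerProductSpace ℝ Q]
    (B : V →L[ℝ] Q) (P : V → V)
    (hP : ∀ v : V, P v ∈ LinearMap.ker (B : V →ₗ[ℝ] Q) ∧ v - P v ∈ (LinearMap.ker (B : V →ₗ[ℝ] Q))ᗮ)
    (β : ℝ) (hβ : 0 < β)
    (hinf : ∀ v ∈ (LinearMap.ker (B : V →ₗ[ℝ] Q))ᗮ, β * ‖v‖ ≤ ‖B v‖) :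
    ∀ lam : ℝ, 0 ≤ lam → ∀ v : V,
      min 1 (β ^ 2) * (‖v‖ ^ 2 + lam * ‖v - P v‖ ^ 2) ≤ ‖v‖ ^ 2 + lam * ‖B v‖ ^ 2 ∧
      ‖v‖ ^ 2 + lam * ‖B v‖ ^ 2 ≤ max 1 (‖B‖ ^ 2) * (‖v‖ ^ 2 + lam * ‖v - P v‖ ^ 2) := by
  intro lam hlam v
  obtain ⟨hker, hperp⟩ := hP v
  have hBv : B v = B (v - P v) := by
    rw [map_sub, show B (P v) = 0 from hker, sub_zero]
  refine ⟨min_one_mul_add_mul_le (sq_nonneg _) (sq_nonneg _) hlam ?_,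
    add_mul_le_max_one_mul_add_mul (sq_nonneg _) (sq_nonneg _) hlam ?_⟩
  · rw [hBv, ← mul_pow]
    exact pow_le_pow_left₀ (by positivity) (hinf _ hperp) 2
  · rw [hBv, ← mul_pow]
    exact pow_le_pow_left₀ (norm_nonneg _) (B.le_opNorm _) 2

/-- Under the inf-sup condition `β‖v‖ ≤ ‖Bv‖` on `(ker B)ᗮ`, the
parameter-dependent quadratic forms `‖v‖² + λ‖Bv‖²` and `‖v‖² + λ‖v - Pv‖²` are
spectrally equivalent with constants `min(1, β²)` and `max(1, ‖B‖²)`, uniformly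
in `λ ≥ 0`, where `P` is the orthogonal projection onto `ker B`. -/
theorem infsup_uniform_form_equivalence {V Q : Type*}
    [NormedAddCommGroup V] [InnerProductSpace ℝ V] [CompleteSpace V]
    [NormedAddCommGroup Q] [InnerProductSpace ℝ Q] [CompleteSpace Q]
    (B : V →L[ℝ] Q) (P : V → V)
    (hP : ∀ v : V, P v ∈ LinearMap.ker (B : V →ₗ[ℝ] Q) ∧ v - P v ∈ (LinearMap.ker (B : V →ₗ[ℝ] Q))ᗮ)
    (β : ℝ) (hβ : 0 < β)
    (hinf : ∀ v ∈ (LinearMap.ker (B : V →ₗ[ℝ] Q))ᗮ, β * ‖v‖ ≤ ‖B v‖) :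
    ∀ lam : ℝ, 0 ≤ lam → ∀ v : V,
      min 1 (β ^ 2) * (‖v‖ ^ 2 + lam * ‖v - P v‖ ^ 2) ≤ ‖v‖ ^ 2 + lam * ‖B v‖ ^ 2 ∧
      ‖v‖ ^ 2 + lam * ‖B v‖ ^ 2 ≤ max 1 (‖B‖ ^ 2) * (‖v‖ ^ 2 + lam * ‖v - P v‖ ^ 2) :=
  infsup_uniform_form_equivalence_general B P hP β hβ hinf
end

section
/- Let V and Q be real Hilbert spaces, B : V → Q a bounded linear operator with Hilbert-space adjoint B† : Q → V, W = ker B, and P : V → V the orthogonal projection onto W. Assume there is β > 0 such that β‖v‖ ≤ ‖Bv‖ for every v ∈ W^⊥. For λ ≥ 0 define the bounded operators A_λ v = v + λ B†(B v) and M_λ g = (λ/(1+λ))·P g + (1/(1+λ))·g. Then A_λ is bijective, and for every v ∈ V, min(1, β²)·⟨A_λ v, v⟩ ≤ ⟨A_λ v, M_λ(A_λ v)⟩ ≤ max(1, ‖B‖²)·⟨A_λ v, v⟩; equivalently, ⟨g, M_λ g⟩ is uniformly (in λ) spectrally equivalent to ⟨g, A_λ^{-1} g⟩ for all g ∈ V.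 -/
/-!
Split `v = w + u` with `w ∈ ker B` and `u ∈ (ker B)ᗮ`. The operator `A_λ = 1 + λ B†B` fixes `w` and
maps `(ker B)ᗮ` into itself, so `P (A_λ v) = w` and both quadratic forms split orthogonally:
`⟪A_λ v, v⟫ = ‖w‖² + ‖u‖² + λ‖Bu‖²` and
`⟪A_λ v, M_λ A_λ v⟫ = ‖w‖² + (‖u‖² + 2λ‖Bu‖² + λ²‖B†Bu‖²) / (1 + λ)`.
The bounds follow term by term from `β‖u‖ ≤ ‖Bu‖ ≤ ‖B‖‖u‖` and `β‖Bu‖ ≤ ‖B†Bu‖ ≤ ‖B‖‖Bu‖`,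
the lower one in the second chain coming from `‖Bu‖² = ⟪B†Bu, u⟫`.
Bijectivity of `A_λ` is Lax–Milgram, as `⟪A_λ v, v⟫ ≥ ‖v‖²`.
-/

open scoped RealInnerProductSpace InnerProduct

section Orthogonal

variable {𝕜 E : Type*} [RCLike 𝕜] [NormedAddCommGroup E] [InnerProductSpace 𝕜 E]
  {K : Submodule 𝕜 E}

theorem apply_add_eq_of_mem_of_mem_orthogonal {P : E → E} (hP : ∀ v, P v ∈ K ∧ v - P v ∈ Kᗮ)
    {w z : E} (hw : w ∈ K) (hz : z ∈ Kᗮ) : P (w + z) = w := by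
  have hK : P (w + z) - w ∈ K := K.sub_mem (hP _).1 hw
  have hKperp : P (w + z) - w ∈ Kᗮ := by
    convert Kᗮ.sub_mem hz (hP (w + z)).2 using 1
    abel
  exact sub_eq_zero.mp (Submodule.disjoint_def.mp K.orthogonal_disjoint _ hK hKperp)

theorem inner_add_add_of_mem_orthogonal {w w' z z' : E} (hw : w ∈ K) (hw' : w' ∈ K)
    (hz : z ∈ Kᗮ) (hz' : z' ∈ Kᗮ) :
    inner 𝕜 (w + z) (w' + z') = inner 𝕜 w w' + inner 𝕜 z z' := by
  rw [inner_add_left, inner_add_right, inner_add_right,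
    Submodule.inner_right_of_mem_orthogonal hw hz', Submodule.inner_left_of_mem_orthogonal hw' hz,
    add_zero, zero_add]

end Orthogonal

theorem ContinuousLinearMap.bijective_of_coercive {V : Type*} [NormedAddCommGroup V]
    [InnerProductSpace ℝ V] [CompleteSpace V] (T : V →L[ℝ] V) {C : ℝ} (hC : 0 < C)
    (hT : ∀ v, C * ‖v‖ * ‖v‖ ≤ ⟪T v, v⟫) : Function.Bijective T := by
  have hcoer : IsCoercive ((innerSL ℝ).comp T) := ⟨C, hC, hT⟩
  have hT' : InnerProductSpace.continuousLinearMapOfBilin ((innerSL ℝ).comp T) = T :=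
    ContinuousLinearMap.ext fun v =>
      (InnerProductSpace.unique_continuousLinearMapOfBilin _ fun _ => rfl).symm
  rw [← hT']
  exact hcoer.continuousLinearEquivOfBilin.bijective

namespace ContinuousLinearMap

variable {V Q : Type*} [NormedAddCommGroup V] [InnerProductSpace ℝ V] [CompleteSpace V]
  [NormedAddCommGroup Q] [InnerProductSpace ℝ Q] [CompleteSpace Q] (B : V →L[ℝ] Q)

theorem adjoint_apply_mem_orthogonal_ker (q : Q) : (B†) q ∈ B.kerᗮ := by
  rw [Submodule.mem_orthogonal]
  intro x hx
  rw [adjoint_inner_right, show B x = 0 from hx, inner_zero_left]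

theorem inner_adjoint_apply_self (u : V) : ⟪(B†) (B u), u⟫ = ‖B u‖ ^ 2 := by
  rw [adjoint_inner_left, real_inner_self_eq_norm_sq]

theorem norm_adjoint_apply_le (q : Q) : ‖(B†) q‖ ≤ ‖B‖ * ‖q‖ := by
  simpa using (B†).le_opNorm q

theorem mul_norm_le_norm_adjoint_apply {β : ℝ} (hβ : 0 ≤ β)
    (hinf : ∀ v ∈ B.kerᗮ, β * ‖v‖ ≤ ‖B v‖) {u : V} (hu : u ∈ B.kerᗮ) :
    β * ‖B u‖ ≤ ‖(B†) (B u)‖ := by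
  rcases (norm_nonneg (B u)).eq_or_lt with h0 | hpos
  · rw [← h0, mul_zero]; exact norm_nonneg _
  refine le_of_mul_le_mul_right ?_ hpos
  calc β * ‖B u‖ * ‖B u‖ = β * ‖B u‖ ^ 2 := by ring
    _ = β * ⟪(B†) (B u), u⟫ := by rw [inner_adjoint_apply_self]
    _ ≤ β * (‖(B†) (B u)‖ * ‖u‖) := by gcongr; exact real_inner_le_norm _ _
    _ = ‖(B†) (B u)‖ * (β * ‖u‖) := by ring
    _ ≤ ‖(B†) (B u)‖ * ‖B u‖ := by gcongr; exact hinf u hu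

/-- The operator `A_λ` of the paper, in the inner product in which `A_0` is the identity. -/
noncomputable def augmentedOperator (lam : ℝ) : V →L[ℝ] V := 1 + lam • (B† ∘L B)

variable {B} {lam : ℝ}

@[simp]
theorem augmentedOperator_apply (u : V) : B.augmentedOperator lam u = u + lam • (B†) (B u) :=
  rfl

theorem augmentedOperator_apply_of_mem_ker {u : V} (hu : u ∈ B.ker) :
    B.augmentedOperator lam u = u := by
  simp [show B u = 0 from hu]

theorem augmentedOperator_apply_mem_orthogonal_ker {u : V} (hu : u ∈ B.kerᗮ) :
    B.augmentedOperator lam u ∈ B.kerᗮ :=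
  Submodule.add_mem _ hu (Submodule.smul_mem _ _ (B.adjoint_apply_mem_orthogonal_ker _))

theorem inner_augmentedOperator_apply_self (u : V) :
    ⟪B.augmentedOperator lam u, u⟫ = ‖u‖ ^ 2 + lam * ‖B u‖ ^ 2 := by
  rw [augmentedOperator_apply, inner_add_left, real_inner_smul_left, inner_adjoint_apply_self,
    real_inner_self_eq_norm_sq]

theorem norm_augmentedOperator_apply_sq (hlam : 0 ≤ lam) (u : V) :
    ‖B.augmentedOperator lam u‖ ^ 2 =
      ‖u‖ ^ 2 + 2 * lam * ‖B u‖ ^ 2 + lam ^ 2 * ‖(B†) (B u)‖ ^ 2 := by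
  rw [augmentedOperator_apply, norm_add_sq_real, real_inner_smul_right, real_inner_comm,
    inner_adjoint_apply_self, norm_smul, Real.norm_of_nonneg hlam]
  ring

theorem bijective_augmentedOperator (hlam : 0 ≤ lam) :
    Function.Bijective (B.augmentedOperator lam) := by
  refine (B.augmentedOperator lam).bijective_of_coercive one_pos fun v => ?_
  rw [inner_augmentedOperator_apply_self]
  linarith [mul_nonneg hlam (sq_nonneg ‖B v‖)]

theorem min_mul_inner_augmentedOperator_le (hlam : 0 ≤ lam) {β : ℝ} (hβ : 0 ≤ β)
    (hinf : ∀ v ∈ B.kerᗮ, β * ‖v‖ ≤ ‖B v‖) {u : V} (hu : u ∈ B.kerᗮ) :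
    min 1 (β ^ 2) * ⟪B.augmentedOperator lam u, u⟫ ≤
      (1 + lam)⁻¹ * ‖B.augmentedOperator lam u‖ ^ 2 := by
  set m := min 1 (β ^ 2)
  have hm1 : m ≤ 1 := min_le_left _ _
  have hmβ : m ≤ β ^ 2 := min_le_right _ _
  have hmu : m * ‖u‖ ^ 2 ≤ ‖B u‖ ^ 2 :=
    calc m * ‖u‖ ^ 2 ≤ (β * ‖u‖) ^ 2 := by rw [mul_pow]; gcongr
      _ ≤ ‖B u‖ ^ 2 := by gcongr; exact hinf u hu
  have hmBu : m * ‖B u‖ ^ 2 ≤ ‖(B†) (B u)‖ ^ 2 :=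
    calc m * ‖B u‖ ^ 2 ≤ (β * ‖B u‖) ^ 2 := by rw [mul_pow]; gcongr
      _ ≤ ‖(B†) (B u)‖ ^ 2 := by gcongr; exact B.mul_norm_le_norm_adjoint_apply hβ hinf hu
  rw [inner_augmentedOperator_apply_self, norm_augmentedOperator_apply_sq hlam,
    le_inv_mul_iff₀ (by positivity)]
  linarith [mul_nonneg (sub_nonneg.2 hm1) (sq_nonneg ‖u‖),
    mul_nonneg (mul_nonneg hlam (sub_nonneg.2 hm1)) (sq_nonneg ‖B u‖),
    mul_nonneg hlam (sub_nonneg.2 hmu), mul_nonneg (sq_nonneg lam) (sub_nonneg.2 hmBu)]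

theorem inv_mul_norm_augmentedOperator_sq_le (hlam : 0 ≤ lam) (u : V) :
    (1 + lam)⁻¹ * ‖B.augmentedOperator lam u‖ ^ 2 ≤
      max 1 (‖B‖ ^ 2) * ⟪B.augmentedOperator lam u, u⟫ := by
  set m := max 1 (‖B‖ ^ 2)
  have hm1 : 1 ≤ m := le_max_left _ _
  have hmB : ‖B‖ ^ 2 ≤ m := le_max_right _ _
  have hmu : ‖B u‖ ^ 2 ≤ m * ‖u‖ ^ 2 :=
    calc ‖B u‖ ^ 2 ≤ (‖B‖ * ‖u‖) ^ 2 := by gcongr; exact B.le_opNorm u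
      _ ≤ m * ‖u‖ ^ 2 := by rw [mul_pow]; gcongr
  have hmBu : ‖(B†) (B u)‖ ^ 2 ≤ m * ‖B u‖ ^ 2 :=
    calc ‖(B†) (B u)‖ ^ 2 ≤ (‖B‖ * ‖B u‖) ^ 2 := by gcongr; exact B.norm_adjoint_apply_le _
      _ ≤ m * ‖B u‖ ^ 2 := by rw [mul_pow]; gcongr
  rw [inner_augmentedOperator_apply_self, norm_augmentedOperator_apply_sq hlam,
    inv_mul_le_iff₀ (by positivity)]
  linarith [mul_nonneg (sub_nonneg.2 hm1) (sq_nonneg ‖u‖),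
    mul_nonneg (mul_nonneg hlam (sub_nonneg.2 hm1)) (sq_nonneg ‖B u‖),
    mul_nonneg hlam (sub_nonneg.2 hmu), mul_nonneg (sq_nonneg lam) (sub_nonneg.2 hmBu)]

end ContinuousLinearMap

open ContinuousLinearMap

/-- Under the inf-sup condition on `(ker B)ᗮ`, for `λ ≥ 0` the operator
`A_λ v = v + λ B†(B v)` is bijective and the preconditioner
`M_λ g = (λ/(1+λ)) P g + (1/(1+λ)) g` (with `P` the orthogonal projection onto `ker B`)
satisfies the uniform spectral equivalence
`min(1,β²)⟨A_λ v, v⟩ ≤ ⟨A_λ v, M_λ(A_λ v)⟩ ≤ max(1,‖B‖²)⟨A_λ v, v⟩`. -/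
theorem preconditioner_spectral_equivalence {V Q : Type*}
    [NormedAddCommGroup V] [InnerProductSpace ℝ V] [CompleteSpace V]
    [NormedAddCommGroup Q] [InnerProductSpace ℝ Q] [CompleteSpace Q]
    (B : V →L[ℝ] Q) (P : V → V)
    (hP : ∀ v : V, P v ∈ LinearMap.ker (B : V →ₗ[ℝ] Q) ∧ v - P v ∈ (LinearMap.ker (B : V →ₗ[ℝ] Q))ᗮ)
    (β : ℝ) (hβ : 0 < β)
    (hinf : ∀ v ∈ (LinearMap.ker (B : V →ₗ[ℝ] Q))ᗮ, β * ‖v‖ ≤ ‖B v‖)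
    (lam : ℝ) (hlam : 0 ≤ lam)
    (A : V → V) (hA : ∀ v, A v = v + lam • (ContinuousLinearMap.adjoint B (B v)))
    (M : V → V) (hM : ∀ g, M g = (lam / (1 + lam)) • P g + (1 / (1 + lam)) • g) :
    Function.Bijective A ∧
    ∀ v : V,
      min 1 (β ^ 2) * ⟪A v, v⟫ ≤ ⟪A v, M (A v)⟫ ∧
      ⟪A v, M (A v)⟫ ≤ max 1 (‖B‖ ^ 2) * ⟪A v, v⟫ := by
  obtain rfl : A = B.augmentedOperator lam := funext hA
  refine ⟨bijective_augmentedOperator hlam, fun v => ?_⟩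
  obtain ⟨hw, hu⟩ := hP v
  set w := P v
  set u := v - P v
  have hAu := augmentedOperator_apply_mem_orthogonal_ker (lam := lam) hu
  have hAv : B.augmentedOperator lam v = w + B.augmentedOperator lam u := by
    rw [← augmentedOperator_apply_of_mem_ker (lam := lam) hw, ← map_add, add_sub_cancel]
  have hMAv : M (B.augmentedOperator lam v) = w + (1 + lam)⁻¹ • B.augmentedOperator lam u := by
    rw [hM, hAv, apply_add_eq_of_mem_of_mem_orthogonal hP hw hAu]
    have : 1 + lam ≠ 0 := by positivity
    match_scalars <;> field_simp
    ring
  have hinner : ⟪B.augmentedOperator lam v, v⟫ = ‖w‖ ^ 2 + ⟪B.augmentedOperator lam u, u⟫ := by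
    rw [hAv, ← add_sub_cancel w v, inner_add_add_of_mem_orthogonal hw hw hAu hu,
      real_inner_self_eq_norm_sq]
  have hinnerM : ⟪B.augmentedOperator lam v, M (B.augmentedOperator lam v)⟫ =
      ‖w‖ ^ 2 + (1 + lam)⁻¹ * ‖B.augmentedOperator lam u‖ ^ 2 := by
    rw [hMAv, hAv, inner_add_add_of_mem_orthogonal hw hw hAu (Submodule.smul_mem _ _ hAu),
      real_inner_smul_right, real_inner_self_eq_norm_sq, real_inner_self_eq_norm_sq]
  rw [hinner, hinnerM]
  constructor
  · linarith [min_mul_inner_augmentedOperator_le hlam hβ.le hinf hu,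
      mul_le_mul_of_nonneg_right (min_le_left 1 (β ^ 2)) (sq_nonneg ‖w‖)]
  · linarith [inv_mul_norm_augmentedOperator_sq_le (B := B) hlam u,
      mul_le_mul_of_nonneg_right (le_max_left 1 (‖B‖ ^ 2)) (sq_nonneg ‖w‖)]
end

section
/- Let d ≥ 1, let ξ ∈ ℝ^d be nonzero, let λ ≥ 0, and let f ∈ ℝ^d. Define u_λ = 2|ξ|^{-2}(f − ((2λ+1)/(2(λ+1)))·Π_ξ f), u_∞ = 2|ξ|^{-2}(f − Π_ξ f), and u_0 = 2|ξ|^{-2}(f − (1/2)·Π_ξ f), where Π_ξ = |ξ|^{-2} ξξ^T. Then u_λ = (λ/(λ+1))·u_∞ + (1/(λ+1))·u_0, and moreover (1/2)|ξ|²·(u_λ + (2λ+1)·Π_ξ u_λ) = f. -/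
open Matrix

/-!
Write `s = 2λ + 1`. Since `Π_ξ` is idempotent, `1 + s Π_ξ` is inverted by `1 - (s / (1 + s)) Π_ξ`,
and `s / (1 + s) = (2λ + 1) / (2(λ + 1))`; this gives the elasticity equation for `u_λ`, while the
convex combination is the identity `λ / (λ + 1) + (1 / 2) / (λ + 1) = (2λ + 1) / (2(λ + 1))`
between the coefficients of `Π_ξ f`.
-/

theorem smul_sub_smul_eq_convex_combination {K V : Type*} [Field K] [CharZero K] [AddCommGroup V]
    [Module K V] (c t : K) (ht : t + 1 ≠ 0) (f p : V) :
    c • (f - ((2 * t + 1) / (2 * (t + 1))) • p) =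
      (t / (t + 1)) • (c • (f - p)) + (1 / (t + 1)) • (c • (f - (1 / 2 : K) • p)) := by
  match_scalars
  · field_simp
  · field_simp
    ring

theorem IsIdempotentElem.one_add_smul_mul_one_sub_div_smul {K A : Type*} [Field K] [Ring A]
    [Algebra K A] {P : A} (hP : IsIdempotentElem P) {s : K} (hs : 1 + s ≠ 0) :
    (1 + s • P) * (1 - (s / (1 + s)) • P) = 1 := by
  rw [mul_sub, mul_one, add_mul, one_mul, smul_mul_smul_comm, hP.eq]
  match_scalars
  · field_simp
  · field_simp
    ring

theorem isIdempotentElem_inv_dotProduct_self_smul_vecMulVec {K n : Type*} [Field K] [Fintype n]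
    {v : n → K} (hv : v ⬝ᵥ v ≠ 0) : IsIdempotentElem ((v ⬝ᵥ v)⁻¹ • vecMulVec v v) := by
  rw [IsIdempotentElem, smul_mul_smul_comm, vecMulVec_mul_vecMulVec, vecMulVec_smul, smul_smul,
    mul_assoc, inv_mul_cancel₀ hv, mul_one]

theorem periodic_convex_combination_general {d : ℕ}
    (ξ : Fin d → ℝ) (hξ : ξ ≠ 0) (lam : ℝ) (hlam : 0 ≤ lam) (f : Fin d → ℝ)
    (Pr : Matrix (Fin d) (Fin d) ℝ)
    (hPr : ∀ j k, Pr j k = ξ j * ξ k / ∑ i, ξ i ^ 2)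
    (ulam uinf u0 : Fin d → ℝ)
    (hulam : ulam = (2 / ∑ i, ξ i ^ 2) •
      (f - ((2 * lam + 1) / (2 * (lam + 1))) • Pr.mulVec f))
    (huinf : uinf = (2 / ∑ i, ξ i ^ 2) • (f - Pr.mulVec f))
    (hu0 : u0 = (2 / ∑ i, ξ i ^ 2) • (f - (1 / 2 : ℝ) • Pr.mulVec f)) :
    ulam = (lam / (lam + 1)) • uinf + (1 / (lam + 1)) • u0 ∧
    ((∑ i, ξ i ^ 2) / 2) • (ulam + (2 * lam + 1) • Pr.mulVec ulam) = f := by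
  have hlam1 : lam + 1 ≠ 0 := by positivity
  refine ⟨by rw [hulam, huinf, hu0, smul_sub_smul_eq_convex_combination _ _ hlam1], ?_⟩
  have hS : ∑ i, ξ i ^ 2 = ξ ⬝ᵥ ξ := by simp only [dotProduct, sq]
  have hS0 : ξ ⬝ᵥ ξ ≠ 0 := dotProduct_self_eq_zero.not.mpr hξ
  have hPr_eq : Pr = (ξ ⬝ᵥ ξ)⁻¹ • vecMulVec ξ ξ := by
    ext j k
    rw [hPr, hS, Matrix.smul_apply, vecMulVec_apply, smul_eq_mul, inv_mul_eq_div]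
  have hPr_idem : IsIdempotentElem Pr :=
    hPr_eq ▸ isIdempotentElem_inv_dotProduct_self_smul_vecMulVec hS0
  have hinv := hPr_idem.one_add_smul_mul_one_sub_div_smul (s := 2 * lam + 1) (by positivity)
  have hcoeff : (2 * lam + 1) / (2 * (lam + 1)) = (2 * lam + 1) / (1 + (2 * lam + 1)) := by
    ring_nf
  calc ((∑ i, ξ i ^ 2) / 2) • (ulam + (2 * lam + 1) • Pr *ᵥ ulam)
      = ((ξ ⬝ᵥ ξ) / 2 * (2 / (ξ ⬝ᵥ ξ))) •
          ((1 + (2 * lam + 1) • Pr) * (1 - ((2 * lam + 1) / (1 + (2 * lam + 1))) • Pr)) *ᵥ f := by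
        rw [hulam, hS, hcoeff, ← mulVec_mulVec, mul_smul]
        simp only [add_mulVec, sub_mulVec, smul_mulVec, one_mulVec, mulVec_smul]
        module
    _ = f := by
        rw [hinv, one_mulVec, ← inv_div (ξ ⬝ᵥ ξ) 2, mul_inv_cancel₀ (div_ne_zero hS0 two_ne_zero),
          one_smul]

/-- For nonzero `ξ ∈ ℝ^d`, `λ ≥ 0` and `f ∈ ℝ^d`, the Fourier solutions
`u_λ = 2|ξ|⁻²(f - ((2λ+1)/(2(λ+1))) Π_ξ f)`, `u_∞ = 2|ξ|⁻²(f - Π_ξ f)`,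
`u_0 = 2|ξ|⁻²(f - (1/2) Π_ξ f)` satisfy the convex combination identity
`u_λ = (λ/(λ+1)) u_∞ + (1/(λ+1)) u_0`, and `u_λ` solves the elasticity symbol equation
`(1/2)|ξ|² (u_λ + (2λ+1) Π_ξ u_λ) = f`. -/
theorem periodic_convex_combination {d : ℕ} (hd : 1 ≤ d)
    (ξ : Fin d → ℝ) (hξ : ξ ≠ 0) (lam : ℝ) (hlam : 0 ≤ lam) (f : Fin d → ℝ)
    (Pr : Matrix (Fin d) (Fin d) ℝ)
    (hPr : ∀ j k, Pr j k = ξ j * ξ k / ∑ i, ξ i ^ 2)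
    (ulam uinf u0 : Fin d → ℝ)
    (hulam : ulam = (2 / ∑ i, ξ i ^ 2) •
      (f - ((2 * lam + 1) / (2 * (lam + 1))) • Pr.mulVec f))
    (huinf : uinf = (2 / ∑ i, ξ i ^ 2) • (f - Pr.mulVec f))
    (hu0 : u0 = (2 / ∑ i, ξ i ^ 2) • (f - (1 / 2 : ℝ) • Pr.mulVec f)) :
    ulam = (lam / (lam + 1)) • uinf + (1 / (lam + 1)) • u0 ∧
    ((∑ i, ξ i ^ 2) / 2) • (ulam + (2 * lam + 1) • Pr.mulVec ulam) = f :=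
  periodic_convex_combination_general ξ hξ lam hlam f Pr hPr ulam uinf u0 hulam huinf hu0
end
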